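/- Let V be the Klein four-group with presentation ⟨i, j, k | i² = j² = k² = ijk = e⟩, with length l taken with respect to the generating set {i, j, k}, and let I = {i}. Then there is no pair (a, b) with a ∈ V^I, b ∈ V_I, j = ab and l(j) = l(a) + l(b): indeed V_I = {e, i} with j ∉ V_I, and l(ji) = l(j) = 1 so j ∉ V^I. Hence the factorisation result for presentations with involutive generators and even-length relations fails for groups with arbitrary presentations. -/

import Mathlib

/-- The relators of the Klein four-group presentation `⟨i, j, k | i² = j² = k² = ijk = e⟩`,
with `i, j, k` indexed by `0, 1, 2 : Fin 3`. -/
def kleinRels : Set (FreeGroup (Fin 3)) :=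
  { FreeGroup.of 0 ^ 2, FreeGroup.of 1 ^ 2, FreeGroup.of 2 ^ 2,
    FreeGroup.of 0 * FreeGroup.of 1 * FreeGroup.of 2 }

/-- The Klein four-group, presented as `⟨i, j, k | i² = j² = k² = ijk = e⟩`. -/
abbrev KleinV : Type := PresentedGroup kleinRels

/-- The images of the generators `i, j, k` in the Klein four-group. -/
def g (x : Fin 3) : KleinV := PresentedGroup.of x

/-- The length of an element of the Klein four-group: the least `r` such that `w` is a
product of `r` factors, each a generator or the inverse of a generator.  A letter is
encoded as a pair `(x, s)` with `s : Bool` recording the sign. -/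
noncomputable def klen (w : KleinV) : ℕ :=
  sInf {r : ℕ | ∃ L : List (Fin 3 × Bool), L.length = r ∧
    (L.map fun p => cond p.2 (g p.1) (g p.1)⁻¹).prod = w}

/-! The relators make each generator an involution and force `k = ji`, so `V_I = {e, i}` and
every generator has length one (it is not trivial, as the map onto `ℤ/2 × ℤ/2` shows).
Then `j` is not in `V^I` because `l(ji) = l(k) = 1`, and the only other candidate
factorisation `j = k · i` has `l(k) + l(i) = 2 ≠ l(j)`. -/

lemma Subgroup.coe_closure_singleton_of_mul_self {G : Type*} [Group G] {a : G} (ha : a * a = 1) :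
    (Subgroup.closure {a} : Set G) = {1, a} := by
  have ha2 : a ^ (2 : ℤ) = 1 := by rw [zpow_two, ha]
  ext y
  rw [SetLike.mem_coe, Subgroup.mem_closure_singleton]
  constructor
  · rintro ⟨n, rfl⟩
    obtain ⟨m, rfl | rfl⟩ := n.even_or_odd'
    · simp [zpow_mul, ha2]
    · simp [zpow_add_one, zpow_mul, ha2]
  · rintro (rfl | rfl)
    exacts [⟨0, zpow_zero _⟩, ⟨1, zpow_one _⟩]

def kleinGensZMod2Sq : Fin 3 → Multiplicative (ZMod 2 × ZMod 2) :=
  ![.ofAdd (1, 0), .ofAdd (0, 1), .ofAdd (1, 1)]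

lemma kleinGensZMod2Sq_rels : ∀ r ∈ kleinRels, FreeGroup.lift kleinGensZMod2Sq r = 1 := by
  rintro r (rfl | rfl | rfl | rfl) <;> decide

noncomputable def kleinToZMod2Sq : KleinV →* Multiplicative (ZMod 2 × ZMod 2) :=
  PresentedGroup.toGroup kleinGensZMod2Sq_rels

lemma kleinToZMod2Sq_g (x : Fin 3) : kleinToZMod2Sq (g x) = kleinGensZMod2Sq x :=
  PresentedGroup.toGroup.of kleinGensZMod2Sq_rels

lemma g_ne_one (x : Fin 3) : g x ≠ 1 := by
  intro h
  have := congrArg kleinToZMod2Sq h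
  rw [kleinToZMod2Sq_g, map_one] at this
  fin_cases x <;> revert this <;> decide

lemma g_one_ne_g_zero : g 1 ≠ g 0 := by
  intro h
  have := congrArg kleinToZMod2Sq h
  rw [kleinToZMod2Sq_g, kleinToZMod2Sq_g] at this
  revert this
  decide

lemma g_mul_self (x : Fin 3) : g x * g x = 1 := by
  have hrel : FreeGroup.of x ^ 2 ∈ kleinRels := by fin_cases x <;> simp [kleinRels]
  simpa [g, PresentedGroup.of, sq] using PresentedGroup.one_of_mem hrel

lemma g_inv (x : Fin 3) : (g x)⁻¹ = g x :=
  inv_eq_of_mul_eq_one_right (g_mul_self x)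

lemma g_one_mul_g_zero : g 1 * g 0 = g 2 := by
  have hrel : FreeGroup.of 0 * FreeGroup.of 1 * FreeGroup.of 2 ∈ kleinRels := by simp [kleinRels]
  have h012 : g 0 * g 1 * g 2 = 1 := by
    simpa [g, PresentedGroup.of] using PresentedGroup.one_of_mem hrel
  rw [← inv_eq_of_mul_eq_one_right h012, mul_inv_rev, g_inv, g_inv]

lemma klen_g (x : Fin 3) : klen (g x) = 1 := by
  set S := {r : ℕ | ∃ L : List (Fin 3 × Bool), L.length = r ∧
    (L.map fun p => cond p.2 (g p.1) (g p.1)⁻¹).prod = g x}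
  have hone : 1 ∈ S := ⟨[(x, true)], rfl, by simp⟩
  refine le_antisymm (Nat.sInf_le hone) (Nat.one_le_iff_ne_zero.mpr fun h0 => ?_)
  have hmem : klen (g x) ∈ S := Nat.sInf_mem ⟨1, hone⟩
  obtain ⟨L, hL, hprod⟩ := h0 ▸ hmem
  rw [List.length_eq_zero_iff.mp hL] at hprod
  exact g_ne_one x (by simpa using hprod.symm)

lemma coe_closure_g_zero : (Subgroup.closure ({g 0} : Set KleinV) : Set KleinV) = {1, g 0} :=
  Subgroup.coe_closure_singleton_of_mul_self (g_mul_self 0)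

/-- For the Klein four-group `V` and `I = {i}`: `V_I = {e, i}`, `j ∉ V_I`,
`l(ji) = l(j) = 1` so `j ∉ V^I`, and `j` admits no length-additive factorisation
`j = ab` with `a ∈ V^I`, `b ∈ V_I`.  Hence the factorisation result fails for
groups with arbitrary presentations. -/
theorem stmt_17 :
    (Subgroup.closure ({g 0} : Set KleinV) : Set KleinV) = {1, g 0} ∧
    g 1 ∉ Subgroup.closure ({g 0} : Set KleinV) ∧
    klen (g 1 * g 0) = 1 ∧ klen (g 1) = 1 ∧
    ¬ (∀ x ∈ ({0} : Set (Fin 3)), klen (g 1) < klen (g 1 * g x)) ∧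
    ¬ ∃ a b : KleinV,
        (∀ x ∈ ({0} : Set (Fin 3)), klen a < klen (a * g x)) ∧
        b ∈ Subgroup.closure ({g 0} : Set KleinV) ∧
        g 1 = a * b ∧ klen (g 1) = klen a + klen b := by
  have hklen_g1g0 : klen (g 1 * g 0) = 1 := by rw [g_one_mul_g_zero, klen_g]
  refine ⟨coe_closure_g_zero, ?_, hklen_g1g0, klen_g 1, ?_, ?_⟩
  · intro h
    rcases (coe_closure_g_zero ▸ h : g 1 ∈ ({1, g 0} : Set KleinV)) with h1 | h0
    exacts [g_ne_one 1 h1, g_one_ne_g_zero h0]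
  · intro h
    have := h 0 rfl
    rw [hklen_g1g0, klen_g] at this
    exact this.false
  · rintro ⟨a, b, ha, hb, hab, hlen⟩
    rcases (coe_closure_g_zero ▸ hb : b ∈ ({1, g 0} : Set KleinV)) with rfl | rfl
    · rw [mul_one] at hab
      have := ha 0 rfl
      rw [← hab, hklen_g1g0, klen_g] at this
      exact this.false
    · have ha : a = g 2 := by
        rw [← g_one_mul_g_zero, hab, mul_assoc, g_mul_self, mul_one]
      rw [ha, klen_g, klen_g, klen_g] at hlen
      omega
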